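/- In the double cross product B⋈H, the tensor coproduct is multiplicative: Δ((a⋉h)(b⋉g)) = Δ(a⋉h)Δ(b⋉g), where Δ(a⋉h) = (a₁⋉h₁)⊗(a₂⋉h₂). The key step uses matched-pair condition (c). -/
import Mathlib


open TensorProduct LinearMap

/-- A unital monoidal Hom-associative algebra. -/
structure HomAlg (k : Type*) [Field k] (A : Type*) [AddCommGroup A] [Module k A] where
  au : A ≃ₗ[k] A
  mul : A →ₗ[k] A →ₗ[k] A
  one : A
  hom_assoc : ∀ x y z : A, mul (au x) (mul y z) = mul (mul x y) (au z)
  one_mul' : ∀ x : A, mul one x = au x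
  mul_one' : ∀ x : A, mul x one = au x
  au_mul : ∀ x y : A, au (mul x y) = mul (au x) (au y)
  au_one : au one = one

/-- A counital monoidal Hom-coassociative coalgebra. -/
structure HomCoalg (k : Type*) [Field k] (C : Type*) [AddCommGroup C] [Module k C] where
  au : C ≃ₗ[k] C
  comul : C →ₗ[k] C ⊗[k] C
  counit : C →ₗ[k] k
  hom_coassoc : (TensorProduct.map au.symm.toLinearMap comul) ∘ₗ comul
    = (TensorProduct.assoc k C C C).toLinearMap ∘ₗ (TensorProduct.map comul au.symm.toLinearMap) ∘ₗ comul
  counit_comul : ∀ c : C,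
    (TensorProduct.lid k C) ((TensorProduct.map counit LinearMap.id) (comul c)) = au.symm c
  comul_counit : ∀ c : C,
    (TensorProduct.rid k C) ((TensorProduct.map LinearMap.id counit) (comul c)) = au.symm c
  comul_au : ∀ c : C, comul (au c) = (TensorProduct.map au.toLinearMap au.toLinearMap) (comul c)
  counit_au : ∀ c : C, counit (au c) = counit c

/-- A monoidal Hom-bialgebra. -/
structure HomBialg (k : Type*) [Field k] (H : Type*) [AddCommGroup H] [Module k H]
    extends HomAlg k H, HomCoalg k H where
  comul_mul : ∀ x y : H, comul (mul x y)
    = (TensorProduct.map (TensorProduct.lift mul) (TensorProduct.lift mul))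
        ((TensorProduct.tensorTensorTensorComm k H H H H) (comul x ⊗ₜ[k] comul y))
  comul_one : comul one = one ⊗ₜ[k] one
  counit_mul : ∀ x y : H, counit (mul x y) = counit x * counit y
  counit_one : counit one = 1

/-- A monoidal Hom-Hopf algebra. -/
structure HomHopf (k : Type*) [Field k] (H : Type*) [AddCommGroup H] [Module k H]
    extends HomBialg k H where
  S : H →ₗ[k] H
  S_au : S ∘ₗ au.toLinearMap = au.toLinearMap ∘ₗ S
  S_mul_id : ∀ x : H,
    TensorProduct.lift mul ((TensorProduct.map S LinearMap.id) (comul x)) = counit x • one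
  id_mul_S : ∀ x : H,
    TensorProduct.lift mul ((TensorProduct.map LinearMap.id S) (comul x)) = counit x • one

section DCP

variable {k : Type*} [Field k] {B H : Type*}
  [AddCommGroup B] [Module k B] [AddCommGroup H] [Module k H]

/-- The double cross product multiplication on `B ⊗ H`:
`(a⋉h)(b⋉g) = Σ a(h₁▷b₁) ⋉ (h₂◁b₂)g`. -/
noncomputable def dcpMulT
    (mulB : B →ₗ[k] B →ₗ[k] B) (comulB : B →ₗ[k] B ⊗[k] B)
    (mulH : H →ₗ[k] H →ₗ[k] H) (comulH : H →ₗ[k] H ⊗[k] H)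
    (actL : H →ₗ[k] B →ₗ[k] B) (actR : H →ₗ[k] B →ₗ[k] H) :
    (B ⊗[k] H) ⊗[k] (B ⊗[k] H) →ₗ[k] B ⊗[k] H :=
  (TensorProduct.map
      ((TensorProduct.lift mulB) ∘ₗ (LinearMap.lTensor B (TensorProduct.lift actL))
        ∘ₗ (TensorProduct.assoc k B H B).toLinearMap)
      ((TensorProduct.lift mulH) ∘ₗ (LinearMap.rTensor H (TensorProduct.lift actR))
        ∘ₗ (TensorProduct.assoc k H B H).symm.toLinearMap))
  ∘ₗ (TensorProduct.tensorTensorTensorComm k (B ⊗[k] H) H B (B ⊗[k] H)).toLinearMap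
  ∘ₗ (TensorProduct.map
        ((TensorProduct.assoc k B H H).symm.toLinearMap ∘ₗ (LinearMap.lTensor B comulH))
        ((TensorProduct.assoc k B B H).toLinearMap ∘ₗ (LinearMap.rTensor H comulB)))

/-- The tensor coproduct on `B ⊗ H`: `Δ(a⋉h) = (a₁⋉h₁) ⊗ (a₂⋉h₂)`. -/
noncomputable def dcpComul
    (comulB : B →ₗ[k] B ⊗[k] B) (comulH : H →ₗ[k] H ⊗[k] H) :
    B ⊗[k] H →ₗ[k] (B ⊗[k] H) ⊗[k] (B ⊗[k] H) :=
  (TensorProduct.tensorTensorTensorComm k B B H H).toLinearMap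
    ∘ₗ (TensorProduct.map comulB comulH)

/-- The double cross product antipode:
`S(a⋉h) = Σ S_H(h₂)▷S_B(a₂) ⋉ S_H(h₁)◁S_B(a₁)`. -/
noncomputable def dcpS
    (comulB : B →ₗ[k] B ⊗[k] B) (S_B : B →ₗ[k] B)
    (comulH : H →ₗ[k] H ⊗[k] H) (S_H : H →ₗ[k] H)
    (actL : H →ₗ[k] B →ₗ[k] B) (actR : H →ₗ[k] B →ₗ[k] H) :
    B ⊗[k] H →ₗ[k] B ⊗[k] H :=
  (TensorProduct.map
      ((TensorProduct.lift actL) ∘ₗ (TensorProduct.map S_H S_B)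
        ∘ₗ (TensorProduct.comm k B H).toLinearMap)
      ((TensorProduct.lift actR) ∘ₗ (TensorProduct.map S_H S_B)
        ∘ₗ (TensorProduct.comm k B H).toLinearMap))
  ∘ₗ (TensorProduct.comm k (B ⊗[k] H) (B ⊗[k] H)).toLinearMap
  ∘ₗ (dcpComul comulB comulH)

/-- A matched pair of monoidal Hom-Hopf algebras `((B,β),(H,α))` with actions
`▷ = actL : H ⊗ B → B` and `◁ = actR : H ⊗ B → H`. -/
structure MatchedPair (Bb : HomHopf k B) (Hh : HomHopf k H)
    (actL : H →ₗ[k] B →ₗ[k] B) (actR : H →ₗ[k] B →ₗ[k] H) : Prop where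
  -- (H,α) is a right (B,β)-Hom-module:
  actR_one : ∀ h : H, actR h Bb.one = Hh.au h
  actR_assoc : ∀ (h : H) (a b : B),
    actR (Hh.au h) (Bb.mul a b) = actR (actR h a) (Bb.au b)
  actR_au : ∀ (h : H) (a : B), Hh.au (actR h a) = actR (Hh.au h) (Bb.au a)
  -- (B,β) is a left (H,α)-Hom-module:
  actL_one : ∀ b : B, actL Hh.one b = Bb.au b
  actL_assoc : ∀ (h g : H) (b : B),
    actL (Hh.au h) (actL g b) = actL (Hh.mul h g) (Bb.au b)
  actL_au : ∀ (h : H) (b : B), Bb.au (actL h b) = actL (Hh.au h) (Bb.au b)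
  -- both are Hom-module coalgebra actions:
  comul_actR : ∀ (h : H) (a : B), Hh.comul (actR h a)
    = (TensorProduct.map (TensorProduct.lift actR) (TensorProduct.lift actR))
        ((TensorProduct.tensorTensorTensorComm k H H B B) (Hh.comul h ⊗ₜ[k] Bb.comul a))
  counit_actR : ∀ (h : H) (a : B), Hh.counit (actR h a) = Hh.counit h * Bb.counit a
  comul_actL : ∀ (h : H) (a : B), Bb.comul (actL h a)
    = (TensorProduct.map (TensorProduct.lift actL) (TensorProduct.lift actL))
        ((TensorProduct.tensorTensorTensorComm k H H B B) (Hh.comul h ⊗ₜ[k] Bb.comul a))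
  counit_actL : ∀ (h : H) (a : B), Bb.counit (actL h a) = Hh.counit h * Bb.counit a
  -- matched-pair condition (a): `(hg)◁a = Σ (h◁(g₁▷β⁻¹(a₁)))(α(g₂)◁a₂)`
  condA : ∀ (h g : H) (a : B), actR (Hh.mul h g) a
    = TensorProduct.lift Hh.mul
        ((TensorProduct.map
            ((actR h) ∘ₗ (TensorProduct.lift actL)
              ∘ₗ (LinearMap.lTensor H Bb.au.symm.toLinearMap))
            (TensorProduct.lift (actR ∘ₗ Hh.au.toLinearMap)))
          ((TensorProduct.tensorTensorTensorComm k H H B B)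
            (Hh.comul g ⊗ₜ[k] Bb.comul a)))
  condA_one : ∀ a : B, actR Hh.one a = Bb.counit a • Hh.one
  -- matched-pair condition (b): `h▷(ab) = Σ (h₁▷β(a₁))((α⁻¹(h₂)◁a₂)▷b)`
  condB : ∀ (h : H) (a b : B), actL h (Bb.mul a b)
    = TensorProduct.lift Bb.mul
        ((TensorProduct.map
            ((TensorProduct.lift actL) ∘ₗ (LinearMap.lTensor H Bb.au.toLinearMap))
            ((actL.flip b) ∘ₗ (TensorProduct.lift (actR ∘ₗ Hh.au.symm.toLinearMap))))
          ((TensorProduct.tensorTensorTensorComm k H H B B)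
            (Hh.comul h ⊗ₜ[k] Bb.comul a)))
  condB_one : ∀ h : H, actL h Bb.one = Hh.counit h • Bb.one
  -- matched-pair condition (c): `Σ (h₁◁a₁)⊗(h₂▷a₂) = Σ (h₂◁a₂)⊗(h₁▷a₁)`
  condC : ∀ (h : H) (a : B),
    (TensorProduct.map (TensorProduct.lift actR) (TensorProduct.lift actL))
        ((TensorProduct.tensorTensorTensorComm k H H B B) (Hh.comul h ⊗ₜ[k] Bb.comul a))
    = (TensorProduct.map (TensorProduct.lift actR) (TensorProduct.lift actL))
        ((TensorProduct.comm k (H ⊗[k] B) (H ⊗[k] B))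
          ((TensorProduct.tensorTensorTensorComm k H H B B)
            (Hh.comul h ⊗ₜ[k] Bb.comul a)))

end DCP
section Aux
variable {k : Type*} [Field k] {B H : Type*}
  [AddCommGroup B] [Module k B] [AddCommGroup H] [Module k H]

lemma dcpMulT_tmul
    (mulB : B →ₗ[k] B →ₗ[k] B) (comulB : B →ₗ[k] B ⊗[k] B)
    (mulH : H →ₗ[k] H →ₗ[k] H) (comulH : H →ₗ[k] H ⊗[k] H)
    (actL : H →ₗ[k] B →ₗ[k] B) (actR : H →ₗ[k] B →ₗ[k] H)
    (a b : B) (h g : H) (sh : Finset (H × H)) (sb : Finset (B × B))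
    (hh : comulH h = ∑ j ∈ sh, j.1 ⊗ₜ[k] j.2)
    (hb : comulB b = ∑ l ∈ sb, l.1 ⊗ₜ[k] l.2) :
    dcpMulT mulB comulB mulH comulH actL actR ((a ⊗ₜ[k] h) ⊗ₜ[k] (b ⊗ₜ[k] g))
      = ∑ j ∈ sh, ∑ l ∈ sb,
          (mulB a (actL j.1 l.1)) ⊗ₜ[k] (mulH (actR j.2 l.2) g) := by
  simp only [dcpMulT, LinearMap.comp_apply, TensorProduct.map_tmul,
    LinearMap.lTensor_tmul, LinearMap.rTensor_tmul, hh, hb,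
    TensorProduct.tmul_sum, TensorProduct.sum_tmul, map_sum,
    LinearEquiv.coe_coe, TensorProduct.assoc_tmul, TensorProduct.assoc_symm_tmul,
    TensorProduct.tensorTensorTensorComm_tmul, TensorProduct.lift.tmul,
    LinearMap.id_coe, id_eq, Finset.sum_apply]
  rw [Finset.sum_comm]

lemma dcpComul_tmul
    (comulB : B →ₗ[k] B ⊗[k] B) (comulH : H →ₗ[k] H ⊗[k] H)
    (a : B) (h : H) (sa : Finset (B × B)) (sh : Finset (H × H))
    (ha : comulB a = ∑ i ∈ sa, i.1 ⊗ₜ[k] i.2)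
    (hh : comulH h = ∑ j ∈ sh, j.1 ⊗ₜ[k] j.2) :
    dcpComul comulB comulH (a ⊗ₜ[k] h)
      = ∑ i ∈ sa, ∑ j ∈ sh, (i.1 ⊗ₜ[k] j.1) ⊗ₜ[k] (i.2 ⊗ₜ[k] j.2) := by
  simp only [dcpComul, LinearMap.comp_apply, TensorProduct.map_tmul, ha, hh,
    TensorProduct.tmul_sum, TensorProduct.sum_tmul, map_sum, LinearEquiv.coe_coe,
    TensorProduct.tensorTensorTensorComm_tmul]
  rw [Finset.sum_comm]

end Aux
section Aux2
variable {k : Type*} [Field k] {H : Type*} [AddCommGroup H] [Module k H]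

/-- Hom-coassociativity in finite-sum form. -/
lemma coassoc_sum (au : H ≃ₗ[k] H) (comul : H →ₗ[k] H ⊗[k] H)
    (hco : (TensorProduct.map au.symm.toLinearMap comul) ∘ₗ comul
      = (TensorProduct.assoc k H H H).toLinearMap
          ∘ₗ (TensorProduct.map comul au.symm.toLinearMap) ∘ₗ comul)
    (x : H) (sx : Finset (H × H)) (hx : comul x = ∑ j ∈ sx, j.1 ⊗ₜ[k] j.2) :
    ∑ j ∈ sx, (au.symm j.1) ⊗ₜ[k] comul j.2
      = ∑ j ∈ sx, (TensorProduct.assoc k H H H) ((comul j.1) ⊗ₜ[k] (au.symm j.2)) := by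
  have h1 := LinearMap.congr_fun hco x
  simp only [LinearMap.comp_apply, hx, map_sum, TensorProduct.map_tmul,
    LinearEquiv.coe_coe, LinearEquiv.coe_toLinearMap] at h1
  exact h1

/-- Twisted coassociativity: `Σ x₁ ⊗ Δ(β x₂) = Σ assoc(Δ(β x₁) ⊗ x₂)`. -/
lemma coassoc_au_sum (au : H ≃ₗ[k] H) (comul : H →ₗ[k] H ⊗[k] H)
    (hco : (TensorProduct.map au.symm.toLinearMap comul) ∘ₗ comul
      = (TensorProduct.assoc k H H H).toLinearMap
          ∘ₗ (TensorProduct.map comul au.symm.toLinearMap) ∘ₗ comul)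
    (hcau : ∀ c : H, comul (au c)
      = (TensorProduct.map au.toLinearMap au.toLinearMap) (comul c))
    (x : H) (sx : Finset (H × H)) (hx : comul x = ∑ j ∈ sx, j.1 ⊗ₜ[k] j.2) :
    ∑ j ∈ sx, j.1 ⊗ₜ[k] comul (au j.2)
      = ∑ j ∈ sx, (TensorProduct.assoc k H H H) ((comul (au j.1)) ⊗ₜ[k] j.2) := by
  have h1 := coassoc_sum au comul hco x sx hx
  have h2 := congrArg (TensorProduct.map au.toLinearMap
      (TensorProduct.map au.toLinearMap au.toLinearMap)) h1
  simp only [map_sum, TensorProduct.map_tmul, LinearEquiv.coe_coe,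
    LinearEquiv.coe_toLinearMap, LinearEquiv.apply_symm_apply,
    TensorProduct.map_map_assoc] at h2
  simp only [← hcau] at h2
  exact h2

end Aux2
section Aux3
variable {k : Type*} [Field k]

lemma psi_tmul {M N P Q : Type*} [AddCommGroup M] [Module k M] [AddCommGroup N]
    [Module k N] [AddCommGroup P] [Module k P] [AddCommGroup Q] [Module k Q]
    (u : M) (w : P) (Z : N ⊗[k] Q) :
    (TensorProduct.map LinearMap.id ((TensorProduct.mk k Q P).flip w))
        ((TensorProduct.assoc k M N Q).symm (u ⊗ₜ[k] Z))
      = (TensorProduct.map (TensorProduct.mk k M N u)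
          ((TensorProduct.mk k Q P).flip w)) Z := by
  induction Z using TensorProduct.induction_on with
  | zero => simp
  | tmul z1 z2 => simp [TensorProduct.assoc_symm_tmul]
  | add z1 z2 h1 h2 => simp only [TensorProduct.tmul_add, map_add, h1, h2]

variable {H : Type*} [AddCommGroup H] [Module k H]

/-- `(Δ ⊗ Δ)(Δ x)` in "rep C" form: `Σ x₁₁ ⊗ Δ(β x₁₂) ⊗ β⁻¹ x₂`. -/
lemma repC_sum (au : H ≃ₗ[k] H) (comul : H →ₗ[k] H ⊗[k] H)
    (hco : (TensorProduct.map au.symm.toLinearMap comul) ∘ₗ comul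
      = (TensorProduct.assoc k H H H).toLinearMap
          ∘ₗ (TensorProduct.map comul au.symm.toLinearMap) ∘ₗ comul)
    (hcau : ∀ c : H, comul (au c)
      = (TensorProduct.map au.toLinearMap au.toLinearMap) (comul c))
    (F : H → Finset (H × H)) (hF : ∀ y : H, comul y = ∑ p ∈ F y, p.1 ⊗ₜ[k] p.2)
    (x : H) :
    ∑ j ∈ F x, comul j.1 ⊗ₜ[k] comul j.2
      = ∑ j ∈ F x, ∑ c ∈ F j.1,
          (TensorProduct.map (TensorProduct.mk k H H c.1)
            ((TensorProduct.mk k H H).flip (au.symm j.2))) (comul (au c.2)) := by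
  have h1 := coassoc_sum au comul hco x (F x) (hF x)
  have h2 := congrArg (TensorProduct.map (comul ∘ₗ au.toLinearMap)
    (LinearMap.id : H ⊗[k] H →ₗ[k] H ⊗[k] H)) h1
  simp only [map_sum, TensorProduct.map_tmul, LinearMap.comp_apply,
    LinearEquiv.coe_coe, LinearEquiv.coe_toLinearMap, LinearEquiv.apply_symm_apply,
    LinearMap.id_coe, id_eq] at h2
  -- h2 : Σ_j Δ j.1 ⊗ Δ j.2 = Σ_j (Δ∘β ⊗ id)(assoc(Δ j.1 ⊗ β⁻¹ j.2))
  rw [h2]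
  refine Finset.sum_congr rfl fun j _ => ?_
  have h3 := coassoc_au_sum au comul hco hcau j.1 (F j.1) (hF j.1)
  have h4 := congrArg ((TensorProduct.map (LinearMap.id : H ⊗[k] H →ₗ[k] H ⊗[k] H)
      ((TensorProduct.mk k H H).flip (au.symm j.2)))
    ∘ (TensorProduct.assoc k H H H).symm) h3
  simp only [Function.comp_apply, map_sum, LinearEquiv.symm_apply_apply,
    psi_tmul, TensorProduct.map_tmul, LinearMap.id_coe, id_eq,
    LinearMap.flip_apply, TensorProduct.mk_apply] at h4
  -- h4 : Σ_c (map (mk c.1) (mk.flip β⁻¹j.2)) (Δ(β c.2)) = Σ_c Δ(β c.1) ⊗ (c.2 ⊗ β⁻¹ j.2)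
  rw [hF j.1]
  simp only [TensorProduct.sum_tmul, map_sum, TensorProduct.assoc_tmul,
    TensorProduct.map_tmul, LinearMap.comp_apply, LinearEquiv.coe_coe,
    LinearEquiv.coe_toLinearMap, LinearMap.id_coe, id_eq]
  exact h4.symm

end Aux3
section Aux4
variable {k : Type*} [Field k] {B H : Type*}
  [AddCommGroup B] [Module k B] [AddCommGroup H] [Module k H]

/-- slot-assembly map used in the key computation. -/
noncomputable def keyPsi (actL : H →ₗ[k] B →ₗ[k] B) (actR : H →ₗ[k] B →ₗ[k] H) :
    (H ⊗[k] H) ⊗[k] (B ⊗[k] B) →ₗ[k] B ⊗[k] H :=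
  (TensorProduct.map (TensorProduct.lift actL) (TensorProduct.lift actR)) ∘ₗ
    (TensorProduct.tensorTensorTensorComm k H H B B).toLinearMap

noncomputable def keyTheta (actL : H →ₗ[k] B →ₗ[k] B) (actR : H →ₗ[k] B →ₗ[k] H) :
    ((H ⊗[k] H) ⊗[k] (H ⊗[k] H)) ⊗[k] ((B ⊗[k] B) ⊗[k] (B ⊗[k] B))
      →ₗ[k] (B ⊗[k] H) ⊗[k] (B ⊗[k] H) :=
  (TensorProduct.map (keyPsi actL actR) (keyPsi actL actR)) ∘ₗ
    (TensorProduct.tensorTensorTensorComm k (H ⊗[k] H) (H ⊗[k] H)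
      (B ⊗[k] B) (B ⊗[k] B)).toLinearMap

lemma key_claimR (actL : H →ₗ[k] B →ₗ[k] B) (actR : H →ₗ[k] B →ₗ[k] H)
    (u w : H) (u' w' : B) (zH : H ⊗[k] H) (zB : B ⊗[k] B) :
    keyTheta actL actR
      (((TensorProduct.map (TensorProduct.mk k H H u)
          ((TensorProduct.mk k H H).flip w)) zH)
        ⊗ₜ[k] ((TensorProduct.map (TensorProduct.mk k B B u')
          ((TensorProduct.mk k B B).flip w')) zB))
      = (TensorProduct.map (TensorProduct.mk k B H (actL u u'))
          ((TensorProduct.mk k B H).flip (actR w w')))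
        ((TensorProduct.map (TensorProduct.lift actR) (TensorProduct.lift actL))
          ((TensorProduct.tensorTensorTensorComm k H H B B) (zH ⊗ₜ[k] zB))) := by
  induction zH using TensorProduct.induction_on with
  | zero => simp
  | add z1 z2 h1 h2 => simp only [map_add, TensorProduct.add_tmul, h1, h2]
  | tmul z1 z2 =>
    induction zB using TensorProduct.induction_on with
    | zero => simp
    | add y1 y2 g1 g2 => simp only [map_add, TensorProduct.tmul_add, g1, g2]
    | tmul y1 y2 =>
      simp [keyTheta, keyPsi, TensorProduct.tensorTensorTensorComm_tmul,
        TensorProduct.mk_apply]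

lemma key_claimL (actL : H →ₗ[k] B →ₗ[k] B) (actR : H →ₗ[k] B →ₗ[k] H)
    (u w : H) (u' w' : B) (zH : H ⊗[k] H) (zB : B ⊗[k] B) :
    keyTheta actL actR
      (((TensorProduct.tensorTensorTensorComm k H H H H)
          ((TensorProduct.map (TensorProduct.mk k H H u)
            ((TensorProduct.mk k H H).flip w)) zH))
        ⊗ₜ[k] ((TensorProduct.tensorTensorTensorComm k B B B B)
          ((TensorProduct.map (TensorProduct.mk k B B u')
            ((TensorProduct.mk k B B).flip w')) zB)))
      = (TensorProduct.map (TensorProduct.mk k B H (actL u u'))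
          ((TensorProduct.mk k B H).flip (actR w w')))
        ((TensorProduct.map (TensorProduct.lift actR) (TensorProduct.lift actL))
          ((TensorProduct.comm k (H ⊗[k] B) (H ⊗[k] B))
            ((TensorProduct.tensorTensorTensorComm k H H B B) (zH ⊗ₜ[k] zB)))) := by
  induction zH using TensorProduct.induction_on with
  | zero => simp
  | add z1 z2 h1 h2 => simp only [map_add, TensorProduct.add_tmul, h1, h2]
  | tmul z1 z2 =>
    induction zB using TensorProduct.induction_on with
    | zero => simp
    | add y1 y2 g1 g2 => simp only [map_add, TensorProduct.tmul_add, g1, g2]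
    | tmul y1 y2 =>
      simp [keyTheta, keyPsi, TensorProduct.tensorTensorTensorComm_tmul,
        TensorProduct.mk_apply, TensorProduct.comm_tmul]

end Aux4
section Aux5
variable {k : Type*} [Field k] {B H : Type*}
  [AddCommGroup B] [Module k B] [AddCommGroup H] [Module k H]

lemma key_sum (actL : H →ₗ[k] B →ₗ[k] B) (actR : H →ₗ[k] B →ₗ[k] H)
    (auH : H ≃ₗ[k] H) (comulH : H →ₗ[k] H ⊗[k] H)
    (hcoH : (TensorProduct.map auH.symm.toLinearMap comulH) ∘ₗ comulH
      = (TensorProduct.assoc k H H H).toLinearMap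
          ∘ₗ (TensorProduct.map comulH auH.symm.toLinearMap) ∘ₗ comulH)
    (hcauH : ∀ c : H, comulH (auH c)
      = (TensorProduct.map auH.toLinearMap auH.toLinearMap) (comulH c))
    (auB : B ≃ₗ[k] B) (comulB : B →ₗ[k] B ⊗[k] B)
    (hcoB : (TensorProduct.map auB.symm.toLinearMap comulB) ∘ₗ comulB
      = (TensorProduct.assoc k B B B).toLinearMap
          ∘ₗ (TensorProduct.map comulB auB.symm.toLinearMap) ∘ₗ comulB)
    (hcauB : ∀ c : B, comulB (auB c)
      = (TensorProduct.map auB.toLinearMap auB.toLinearMap) (comulB c))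
    (FH : H → Finset (H × H)) (hFH : ∀ y : H, comulH y = ∑ p ∈ FH y, p.1 ⊗ₜ[k] p.2)
    (FB : B → Finset (B × B)) (hFB : ∀ y : B, comulB y = ∑ p ∈ FB y, p.1 ⊗ₜ[k] p.2)
    (condC : ∀ (h : H) (a : B),
      (TensorProduct.map (TensorProduct.lift actR) (TensorProduct.lift actL))
          ((TensorProduct.tensorTensorTensorComm k H H B B) (comulH h ⊗ₜ[k] comulB a))
        = (TensorProduct.map (TensorProduct.lift actR) (TensorProduct.lift actL))
            ((TensorProduct.comm k (H ⊗[k] B) (H ⊗[k] B))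
              ((TensorProduct.tensorTensorTensorComm k H H B B)
                (comulH h ⊗ₜ[k] comulB a))))
    (h : H) (b : B) :
    (∑ j ∈ FH h, ∑ l ∈ FB b, ∑ f ∈ FB l.2, ∑ d ∈ FB l.1, ∑ e ∈ FH j.2, ∑ c ∈ FH j.1,
        ((actL c.1 d.1) ⊗ₜ[k] (actR e.1 f.1)) ⊗ₜ[k] ((actL c.2 d.2) ⊗ₜ[k] (actR e.2 f.2)))
      = ∑ j ∈ FH h, ∑ l ∈ FB b, ∑ f ∈ FB l.2, ∑ d ∈ FB l.1, ∑ e ∈ FH j.2, ∑ c ∈ FH j.1,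
          ((actL c.1 d.1) ⊗ₜ[k] (actR c.2 d.2)) ⊗ₜ[k] ((actL e.1 f.1) ⊗ₜ[k] (actR e.2 f.2)) := by
  have hR : (∑ j ∈ FH h, ∑ l ∈ FB b, ∑ f ∈ FB l.2, ∑ d ∈ FB l.1, ∑ e ∈ FH j.2,
        ∑ c ∈ FH j.1,
        ((actL c.1 d.1) ⊗ₜ[k] (actR c.2 d.2)) ⊗ₜ[k] ((actL e.1 f.1) ⊗ₜ[k] (actR e.2 f.2)))
      = keyTheta actL actR ((∑ j ∈ FH h, comulH j.1 ⊗ₜ[k] comulH j.2)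
          ⊗ₜ[k] (∑ l ∈ FB b, comulB l.1 ⊗ₜ[k] comulB l.2)) := by
    simp only [TensorProduct.sum_tmul, TensorProduct.tmul_sum, map_sum]
    conv_rhs => rw [Finset.sum_comm]
    refine Finset.sum_congr rfl fun j _ => Finset.sum_congr rfl fun l _ => ?_
    rw [hFH j.1, hFH j.2, hFB l.1, hFB l.2]
    simp [keyTheta, keyPsi, TensorProduct.sum_tmul, TensorProduct.tmul_sum,
      map_sum, TensorProduct.tensorTensorTensorComm_tmul]
  have hL : (∑ j ∈ FH h, ∑ l ∈ FB b, ∑ f ∈ FB l.2, ∑ d ∈ FB l.1, ∑ e ∈ FH j.2,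
        ∑ c ∈ FH j.1,
        ((actL c.1 d.1) ⊗ₜ[k] (actR e.1 f.1)) ⊗ₜ[k] ((actL c.2 d.2) ⊗ₜ[k] (actR e.2 f.2)))
      = keyTheta actL actR
          ((TensorProduct.map
              (TensorProduct.tensorTensorTensorComm k H H H H).toLinearMap
              (TensorProduct.tensorTensorTensorComm k B B B B).toLinearMap)
            ((∑ j ∈ FH h, comulH j.1 ⊗ₜ[k] comulH j.2)
              ⊗ₜ[k] (∑ l ∈ FB b, comulB l.1 ⊗ₜ[k] comulB l.2))) := by
    simp only [TensorProduct.sum_tmul, TensorProduct.tmul_sum, map_sum]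
    conv_rhs => rw [Finset.sum_comm]
    refine Finset.sum_congr rfl fun j _ => Finset.sum_congr rfl fun l _ => ?_
    rw [hFH j.1, hFH j.2, hFB l.1, hFB l.2]
    simp [keyTheta, keyPsi, TensorProduct.sum_tmul, TensorProduct.tmul_sum,
      map_sum, TensorProduct.tensorTensorTensorComm_tmul]
  rw [hL, hR, repC_sum auH comulH hcoH hcauH FH hFH h,
    repC_sum auB comulB hcoB hcauB FB hFB b]
  simp only [TensorProduct.sum_tmul, TensorProduct.tmul_sum, map_sum,
    TensorProduct.map_tmul, LinearEquiv.coe_coe]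
  refine Finset.sum_congr rfl fun l _ => Finset.sum_congr rfl fun d _ => ?_
  refine Finset.sum_congr rfl fun j _ => Finset.sum_congr rfl fun c _ => ?_
  rw [key_claimL, key_claimR, condC (auH c.2) (auB d.2)]

end Aux5

set_option maxHeartbeats 2000000
set_option synthInstance.maxHeartbeats 1000000

/-- In the double cross product `B ⋈ H`, the tensor coproduct is
multiplicative: `Δ((a⋉h)(b⋉g)) = Δ(a⋉h)Δ(b⋉g)` (the key step using matched-pair
condition (c)). -/
theorem doubleCrossProduct_comul_mul
    {k : Type*} [Field k] {B H : Type*}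
    [AddCommGroup B] [Module k B] [AddCommGroup H] [Module k H]
    (Bb : HomHopf k B) (Hh : HomHopf k H)
    (actL : H →ₗ[k] B →ₗ[k] B) (actR : H →ₗ[k] B →ₗ[k] H)
    (mp : MatchedPair Bb Hh actL actR) :
    ∀ x y : B ⊗[k] H,
      (dcpComul Bb.comul Hh.comul)
          ((dcpMulT Bb.mul Bb.comul Hh.mul Hh.comul actL actR) (x ⊗ₜ[k] y))
      = (TensorProduct.map (dcpMulT Bb.mul Bb.comul Hh.mul Hh.comul actL actR)
            (dcpMulT Bb.mul Bb.comul Hh.mul Hh.comul actL actR))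
          ((TensorProduct.tensorTensorTensorComm k (B ⊗[k] H) (B ⊗[k] H)
              (B ⊗[k] H) (B ⊗[k] H))
            ((dcpComul Bb.comul Hh.comul) x ⊗ₜ[k] (dcpComul Bb.comul Hh.comul) y)) := by
  intro x y
  induction x using TensorProduct.induction_on with
  | zero => simp
  | add x1 x2 h1 h2 =>
    simp only [TensorProduct.add_tmul, map_add, h1, h2]
  | tmul a h =>
    induction y using TensorProduct.induction_on with
    | zero => simp
    | add y1 y2 g1 g2 =>
      simp only [TensorProduct.tmul_add, map_add, g1, g2]
    | tmul b g =>
      classical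
      choose FB hFB using fun x : B => TensorProduct.exists_finset (Bb.comul x)
      choose FH hFH using fun x : H => TensorProduct.exists_finset (Hh.comul x)
      have hKEY := key_sum actL actR Hh.au Hh.comul Hh.hom_coassoc Hh.comul_au
        Bb.au Bb.comul Bb.hom_coassoc Bb.comul_au FH hFH FB hFB mp.condC h b
      have hKEY2 := congrArg (fun z : (B ⊗[k] H) ⊗[k] (B ⊗[k] H) =>
        ∑ i ∈ FB a, ∑ m ∈ FH g,
          (TensorProduct.map
            (TensorProduct.map (Bb.mul i.1) ((Hh.mul).flip m.1))
            (TensorProduct.map (Bb.mul i.2) ((Hh.mul).flip m.2))) z) hKEY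
      simp only [map_sum, TensorProduct.map_tmul, LinearMap.flip_apply] at hKEY2
      -- hKEY2 : SL = SR with nesting (i, m, j, l, f, d, e, c)
      have EL : (dcpComul Bb.comul Hh.comul)
            ((dcpMulT Bb.mul Bb.comul Hh.mul Hh.comul actL actR)
              ((a ⊗ₜ[k] h) ⊗ₜ[k] (b ⊗ₜ[k] g)))
          = ∑ j ∈ FH h, ∑ l ∈ FB b, ∑ m ∈ FH g, ∑ f ∈ FB l.2, ∑ e ∈ FH j.2,
              ∑ d ∈ FB l.1, ∑ c ∈ FH j.1, ∑ i ∈ FB a,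
              ((Bb.mul i.1 (actL c.1 d.1)) ⊗ₜ[k] (Hh.mul (actR e.1 f.1) m.1))
                ⊗ₜ[k] ((Bb.mul i.2 (actL c.2 d.2)) ⊗ₜ[k] (Hh.mul (actR e.2 f.2) m.2)) := by
        rw [dcpMulT_tmul Bb.mul Bb.comul Hh.mul Hh.comul actL actR a b h g
          (FH h) (FB b) (hFH h) (hFB b)]
        simp only [map_sum]
        refine Finset.sum_congr rfl fun j _ => Finset.sum_congr rfl fun l _ => ?_
        simp only [dcpComul, LinearMap.comp_apply, TensorProduct.map_tmul,
          LinearEquiv.coe_coe]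
        rw [Bb.comul_mul a (actL j.1 l.1), Hh.comul_mul (actR j.2 l.2) g,
          mp.comul_actL j.1 l.1, mp.comul_actR j.2 l.2,
          hFB a, hFH g, hFH j.1, hFH j.2, hFB l.1, hFB l.2]
        simp only [TensorProduct.sum_tmul, TensorProduct.tmul_sum, map_sum,
          TensorProduct.tensorTensorTensorComm_tmul, TensorProduct.map_tmul,
          TensorProduct.lift.tmul]
      have ER : (TensorProduct.map (dcpMulT Bb.mul Bb.comul Hh.mul Hh.comul actL actR)
                (dcpMulT Bb.mul Bb.comul Hh.mul Hh.comul actL actR))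
              ((TensorProduct.tensorTensorTensorComm k (B ⊗[k] H) (B ⊗[k] H)
                  (B ⊗[k] H) (B ⊗[k] H))
                ((dcpComul Bb.comul Hh.comul) (a ⊗ₜ[k] h)
                  ⊗ₜ[k] (dcpComul Bb.comul Hh.comul) (b ⊗ₜ[k] g)))
          = ∑ l ∈ FB b, ∑ m ∈ FH g, ∑ i ∈ FB a, ∑ j ∈ FH h, ∑ e ∈ FH j.2,
              ∑ f ∈ FB l.2, ∑ c ∈ FH j.1, ∑ d ∈ FB l.1,
              ((Bb.mul i.1 (actL c.1 d.1)) ⊗ₜ[k] (Hh.mul (actR c.2 d.2) m.1))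
                ⊗ₜ[k] ((Bb.mul i.2 (actL e.1 f.1)) ⊗ₜ[k] (Hh.mul (actR e.2 f.2) m.2)) := by
        rw [dcpComul_tmul Bb.comul Hh.comul a h (FB a) (FH h) (hFB a) (hFH h),
          dcpComul_tmul Bb.comul Hh.comul b g (FB b) (FH g) (hFB b) (hFH g)]
        simp only [TensorProduct.sum_tmul, TensorProduct.tmul_sum, map_sum,
          TensorProduct.tensorTensorTensorComm_tmul]
        refine Finset.sum_congr rfl fun l _ => Finset.sum_congr rfl fun m _ =>
          Finset.sum_congr rfl fun i _ => Finset.sum_congr rfl fun j _ => ?_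
        rw [TensorProduct.map_tmul,
          dcpMulT_tmul Bb.mul Bb.comul Hh.mul Hh.comul actL actR i.1 l.1 j.1 m.1
            (FH j.1) (FB l.1) (hFH j.1) (hFB l.1),
          dcpMulT_tmul Bb.mul Bb.comul Hh.mul Hh.comul actL actR i.2 l.2 j.2 m.2
            (FH j.2) (FB l.2) (hFH j.2) (hFB l.2)]
        simp only [TensorProduct.sum_tmul, TensorProduct.tmul_sum]
      rw [EL, ER]
      -- reorder LHS from (j,l,m,f,e,d,c,i) to (i,m,j,l,f,d,e,c)
      conv_lhs => enter [2, j, 2, l, 2, m, 2, f]; rw [Finset.sum_comm]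
      conv_lhs => enter [2, j, 2, l, 2, m, 2, f, 2, d, 2, e]; rw [Finset.sum_comm]
      conv_lhs => enter [2, j, 2, l, 2, m, 2, f, 2, d]; rw [Finset.sum_comm]
      conv_lhs => enter [2, j, 2, l, 2, m, 2, f]; rw [Finset.sum_comm]
      conv_lhs => enter [2, j, 2, l, 2, m]; rw [Finset.sum_comm]
      conv_lhs => enter [2, j, 2, l]; rw [Finset.sum_comm]
      conv_lhs => enter [2, j]; rw [Finset.sum_comm]
      conv_lhs => rw [Finset.sum_comm]
      conv_lhs => enter [2, i, 2, j]; rw [Finset.sum_comm]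
      conv_lhs => enter [2, i]; rw [Finset.sum_comm]
      -- reorder RHS from (l,m,i,j,c,d,e,f) to (i,m,j,l,f,d,e,c)
      conv_rhs => enter [2, l, 2, m, 2, i, 2, j]; rw [Finset.sum_comm]
      conv_rhs => enter [2, l, 2, m, 2, i, 2, j, 2, f, 2, e]; rw [Finset.sum_comm]
      conv_rhs => enter [2, l, 2, m, 2, i, 2, j, 2, f]; rw [Finset.sum_comm]
      conv_rhs => enter [2, l]; rw [Finset.sum_comm]
      conv_rhs => rw [Finset.sum_comm]
      conv_rhs => enter [2, i]; rw [Finset.sum_comm]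
      conv_rhs => enter [2, i, 2, m]; rw [Finset.sum_comm]
      exact hKEY2
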